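/- Let (Y, F) be a topological fractal and let Z be a finite union of continuous images of Y such that Y ∩ Z = {x₀} is a singleton. Extending each f ∈ F to Y ∪ Z by the constant value f(x₀) on Z, and each p ∈ P (with P(Y) = Z) by the constant value p(x₀) on Z, yields a family making Y ∪ Z the underlying space of a topological fractal. -/

import Mathlib

open Set

/-- Composition of a list of self-maps. -/
def Comp {X : Type*} (l : List (X → X)) : X → X := l.foldr (· ∘ ·) id

/-- `F` is a topologically contracting system on `Y ⊆ X`. -/
def TopContracting {X : Type*} [TopologicalSpace X] (F : Set (X → X)) (Y : Set X) : Prop :=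
  ∀ 𝒰 : Set (Set X), (∀ U ∈ 𝒰, IsOpen U) → Y ⊆ ⋃₀ 𝒰 →
    ∃ n : ℕ, ∀ l : List (X → X), l.length = n → (∀ f ∈ l, f ∈ F) →
      ∃ U ∈ 𝒰, Comp l '' Y ⊆ U

/-- `(Y, F)` is a topological fractal, where `Y` is a compact subset of an ambient space. -/
def TopFractalOn {X : Type*} [TopologicalSpace X] (F : Set (X → X)) (Y : Set X) : Prop :=
  IsCompact Y ∧ F.Finite ∧ (∀ f ∈ F, ContinuousOn f Y ∧ f '' Y ⊆ Y) ∧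
    (⋃ f ∈ F, f '' Y) = Y ∧ TopContracting F Y

/-!
An extended map agrees with the original one on `Y` and is constant on `Z`, with its value in
`Y ∪ Z`. Take a long word `g₁ ∘ g₂ ∘ ⋯ ∘ gₙ` in the extended maps. If `g₂, …, gₙ` all extend maps
`f₂, …, fₙ` of `F`, its image of `Y ∪ Z` is `q (f₂ ∘ ⋯ ∘ fₙ (Y))` with `q ∈ F ∪ P`, which lies in
one set of a given open cover once `n` is large, because `F` is contracting and `F ∪ P` is a
finite family of maps continuous on `Y`. Otherwise some `gᵢ` with `i ≥ 2` extends a map of `P`,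
so it maps everything into `Z`, where `gᵢ₋₁` is constant: the whole word is constant.
-/

open Filter

theorem List.exists_map_eq_of_forall_mem_image {α β : Type*} {f : α → β} {s : Set α}
    {l : List β} (h : ∀ b ∈ l, b ∈ f '' s) : ∃ l' : List α, (∀ a ∈ l', a ∈ s) ∧ l'.map f = l := by
  induction l with
  | nil => exact ⟨[], by simp, rfl⟩
  | cons b l ih =>
    obtain ⟨a, ha, rfl⟩ := h b List.mem_cons_self
    obtain ⟨l', hl', rfl⟩ := ih fun b hb => h b (List.mem_cons_of_mem _ hb)
    exact ⟨a :: l', by simpa [ha] using hl', rfl⟩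

section Comp

variable {X : Type*}

theorem comp_cons (g : X → X) (l : List (X → X)) : Comp (g :: l) = g ∘ Comp l := rfl

theorem comp_append (l₁ l₂ : List (X → X)) : Comp (l₁ ++ l₂) = Comp l₁ ∘ Comp l₂ := by
  induction l₁ with
  | nil => rfl
  | cons g l ih => rw [List.cons_append, comp_cons, comp_cons, ih, Function.comp_assoc]

theorem comp_image_subset {S : Set X} {l : List (X → X)} (hl : ∀ f ∈ l, f '' S ⊆ S) :
    Comp l '' S ⊆ S := by
  induction l with
  | nil => simp [Comp]
  | cons g l ih =>
    rw [comp_cons, image_comp]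
    exact (image_mono (ih fun f hf => hl f (List.mem_cons_of_mem _ hf))).trans
      (hl g List.mem_cons_self)

theorem comp_image_subset_take {F : Set (X → X)} {Y : Set X} (hF : ∀ f ∈ F, f '' Y ⊆ Y)
    {l : List (X → X)} (hl : ∀ f ∈ l, f ∈ F) (n : ℕ) :
    Comp l '' Y ⊆ Comp (l.take n) '' Y :=
  calc Comp l '' Y = Comp (l.take n) '' (Comp (l.drop n) '' Y) := by
        rw [← image_comp, ← comp_append, List.take_append_drop]
    _ ⊆ Comp (l.take n) '' Y :=
        image_mono (comp_image_subset fun f hf => hF f (hl f (List.mem_of_mem_drop hf)))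

theorem comp_append_cons_cons_eq_const {Z : Set X} {a : X} (c b : List (X → X)) {h k : X → X}
    (hh : ∀ z ∈ Z, h z = a) (hk : ∀ x, k x ∈ Z) :
    Comp (c ++ h :: k :: b) = fun _ => Comp c a := by
  funext x
  simp only [comp_append, comp_cons, Function.comp_apply, hh _ (hk _)]

end Comp

theorem TopContracting.eventually_image_subset {X X' : Type*} [TopologicalSpace X]
    [TopologicalSpace X'] {F : Set (X → X)} {Y : Set X} (hc : TopContracting F Y)
    (hF : ∀ f ∈ F, f '' Y ⊆ Y) {q : X → X'} (hq : ContinuousOn q Y) {𝒰 : Set (Set X')}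
    (h𝒰 : ∀ U ∈ 𝒰, IsOpen U) (hcov : q '' Y ⊆ ⋃₀ 𝒰) :
    ∀ᶠ n in atTop, ∀ l : List (X → X), l.length = n → (∀ f ∈ l, f ∈ F) →
      ∃ U ∈ 𝒰, q '' (Comp l '' Y) ⊆ U := by
  set 𝒱 := {V : Set X | IsOpen V ∧ ∃ U ∈ 𝒰, V ∩ Y ⊆ q ⁻¹' U}
  have hY : Y ⊆ ⋃₀ 𝒱 := by
    intro y hy
    obtain ⟨U, hU, hyU⟩ := hcov (mem_image_of_mem q hy)
    obtain ⟨V, hV, hyV, hVU⟩ :=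
      mem_nhdsWithin.1 ((hq y hy).preimage_mem_nhdsWithin ((h𝒰 U hU).mem_nhds hyU))
    exact ⟨V, ⟨hV, U, hU, hVU⟩, hyV⟩
  obtain ⟨n, hn⟩ := hc 𝒱 (fun V hV => hV.1) hY
  refine eventually_atTop.2 ⟨n, fun m hm l hl hlF => ?_⟩
  obtain ⟨V, ⟨-, U, hU, hVU⟩, hsub⟩ :=
    hn (l.take n) (by simp [hl, hm]) fun f hf => hlF f (List.mem_of_mem_take hf)
  refine ⟨U, hU, image_subset_iff.2 fun x hx => hVU ⟨?_, ?_⟩⟩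
  · exact hsub (comp_image_subset_take hF hlF n hx)
  · exact comp_image_subset (fun f hf => hF f (hlF f hf)) hx

section ExtendConst

variable {X : Type*} {Y Z : Set X} {x₀ : X}

open scoped Classical in
noncomputable def extendConst (Y : Set X) (x₀ : X) (q : X → X) : X → X :=
  fun x => if x ∈ Y then q x else q x₀

theorem eqOn_extendConst (q : X → X) : EqOn (extendConst Y x₀ q) q Y :=
  fun _ hx => if_pos hx

theorem extendConst_eq_of_mem (hYZ : Y ∩ Z ⊆ {x₀}) (q : X → X) {z : X} (hz : z ∈ Z) :
    extendConst Y x₀ q z = q x₀ := by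
  by_cases hzY : z ∈ Y
  · rw [eqOn_extendConst q hzY, hYZ ⟨hzY, hz⟩]
  · exact if_neg hzY

theorem range_extendConst_subset (hx₀ : x₀ ∈ Y) (q : X → X) :
    range (extendConst Y x₀ q) ⊆ q '' Y := by
  rintro _ ⟨x, rfl⟩
  by_cases hx : x ∈ Y
  · exact ⟨x, hx, (eqOn_extendConst q hx).symm⟩
  · exact ⟨x₀, hx₀, (if_neg hx).symm⟩

theorem image_extendConst (hx₀ : x₀ ∈ Y) {S : Set X} (hS : Y ⊆ S) (q : X → X) :
    extendConst Y x₀ q '' S = q '' Y :=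
  ((image_subset_range _ _).trans (range_extendConst_subset hx₀ q)).antisymm
    ((eqOn_extendConst q).image_eq.symm.subset.trans (image_mono hS))

theorem continuousOn_extendConst [TopologicalSpace X] (hY : IsClosed Y) (hZ : IsClosed Z)
    (hYZ : Y ∩ Z ⊆ {x₀}) {q : X → X} (hq : ContinuousOn q Y) :
    ContinuousOn (extendConst Y x₀ q) (Y ∪ Z) :=
  (hq.congr (eqOn_extendConst q)).union_of_isClosed
    (continuousOn_const.congr fun _ hz => extendConst_eq_of_mem hYZ q hz) hY hZ

theorem range_extendConst_comp_subset {F : Set (X → X)} (hx₀ : x₀ ∈ Y)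
    (hF : ∀ f ∈ F, f '' Y ⊆ Y) (q : X → X) {l : List (X → X)} (hl : ∀ f ∈ l, f ∈ F) :
    range (extendConst Y x₀ q ∘ Comp (l.map (extendConst Y x₀))) ⊆ q '' (Comp l '' Y) := by
  induction l generalizing q with
  | nil => simpa [Comp] using range_extendConst_subset hx₀ q
  | cons f t ih =>
    have htY : Comp t '' Y ⊆ Y :=
      comp_image_subset fun g hg => hF g (hl g (List.mem_cons_of_mem _ hg))
    have hf : f ∈ F := hl f List.mem_cons_self
    rw [List.map_cons, comp_cons, range_comp, comp_cons, image_comp]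
    calc extendConst Y x₀ q '' range (extendConst Y x₀ f ∘ Comp (t.map (extendConst Y x₀)))
        ⊆ extendConst Y x₀ q '' (f '' (Comp t '' Y)) :=
          image_mono (ih f fun g hg => hl g (List.mem_cons_of_mem _ hg))
      _ = q '' (f '' (Comp t '' Y)) :=
          ((eqOn_extendConst q).mono ((image_mono htY).trans (hF f hf))).image_eq

theorem exists_comp_cons_eq_const {F P : Set (X → X)} (hx₀ : x₀ ∈ Y) (hYZ : Y ∩ Z ⊆ {x₀})
    (hPZ : ∀ p ∈ P, p '' Y ⊆ Z) {g : X → X} {l : List (X → X)}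
    (hl : ∀ g' ∈ g :: l, g' ∈ extendConst Y x₀ '' (F ∪ P))
    (hlF : ¬∀ g' ∈ l, g' ∈ extendConst Y x₀ '' F) :
    ∃ v, Comp (g :: l) = fun _ => v := by
  obtain ⟨_, hk, hkF⟩ := not_forall₂.1 hlF
  obtain ⟨p, hp, rfl⟩ := hl _ (List.mem_cons_of_mem _ hk)
  have hpP : p ∈ P := hp.resolve_left fun hpF => hkF ⟨p, hpF, rfl⟩
  obtain ⟨a, b, rfl⟩ := List.append_of_mem hk
  obtain ⟨c, h, hch⟩ := (g :: a).eq_nil_or_concat'.resolve_left (List.cons_ne_nil _ _)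
  have hword : g :: (a ++ extendConst Y x₀ p :: b) = c ++ h :: extendConst Y x₀ p :: b := by
    rw [← List.cons_append, hch, List.append_assoc, List.singleton_append]
  obtain ⟨r, -, rfl⟩ := hl h (by simp [hword])
  exact ⟨_, hword ▸ comp_append_cons_cons_eq_const c b
    (fun z hz => extendConst_eq_of_mem hYZ r hz)
    (fun x => hPZ p hpP (range_extendConst_subset hx₀ p ⟨x, rfl⟩))⟩

theorem topContracting_image_extendConst [TopologicalSpace X] {F P : Set (X → X)}
    (hx₀ : x₀ ∈ Y) (hYZ : Y ∩ Z ⊆ {x₀}) (hFY : ∀ f ∈ F, f '' Y ⊆ Y) (hc : TopContracting F Y)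
    (hPZ : ∀ p ∈ P, p '' Y ⊆ Z) (hfin : (F ∪ P).Finite)
    (hcont : ∀ q ∈ F ∪ P, ContinuousOn q Y) :
    TopContracting (extendConst Y x₀ '' (F ∪ P)) (Y ∪ Z) := by
  intro 𝒰 h𝒰 hcov
  have hQ : ∀ q ∈ F ∪ P, q '' Y ⊆ Y ∪ Z := by
    rintro q (hq | hq)
    exacts [(hFY q hq).trans subset_union_left, (hPZ q hq).trans subset_union_right]
  obtain ⟨n, hn⟩ := (hfin.eventually_all.2 fun q hq =>
    hc.eventually_image_subset hFY (hcont q hq) h𝒰 ((hQ q hq).trans hcov)).exists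
  refine ⟨n + 1, ?_⟩
  rintro (_ | ⟨g, l⟩) hlen hl
  · simp at hlen
  by_cases hlF : ∀ g' ∈ l, g' ∈ extendConst Y x₀ '' F
  · obtain ⟨q, hq, rfl⟩ := hl g List.mem_cons_self
    obtain ⟨l', hl'F, rfl⟩ := List.exists_map_eq_of_forall_mem_image hlF
    obtain ⟨U, hU, hsub⟩ := hn q hq l' (by simpa using hlen) hl'F
    exact ⟨U, hU, (image_subset_range _ _).trans
      ((range_extendConst_comp_subset hx₀ hFY q hl'F).trans hsub)⟩
  obtain ⟨v, hv⟩ := exists_comp_cons_eq_const hx₀ hYZ hPZ hl hlF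
  have hmaps : ∀ g' ∈ g :: l, g' '' (Y ∪ Z) ⊆ Y ∪ Z := by
    intro g' hg'
    obtain ⟨q, hq, rfl⟩ := hl g' hg'
    rw [image_extendConst hx₀ subset_union_left]
    exact hQ q hq
  have hvYZ : v ∈ Y ∪ Z := by
    simpa [hv] using comp_image_subset hmaps (mem_image_of_mem _ (Or.inl hx₀))
  obtain ⟨U, hU, hvU⟩ := hcov hvYZ
  exact ⟨U, hU, by rintro _ ⟨x, -, rfl⟩; rwa [hv]⟩

end ExtendConst

open scoped Classical in
theorem stmt7 {W : Type*} [TopologicalSpace W] [T2Space W] (Y Z : Set W)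
    (F P : Set (W → W)) (hYF : TopFractalOn F Y)
    (hP : P.Finite) (hPcont : ∀ p ∈ P, ContinuousOn p Y)
    (hPZ : (⋃ p ∈ P, p '' Y) = Z)
    (x₀ : W) (hYZ : Y ∩ Z = {x₀}) (hcomp : IsCompact (Y ∪ Z)) :
    TopFractalOn
      ({g | ∃ f ∈ F, g = fun x => if x ∈ Y then f x else f x₀} ∪
       {g | ∃ p ∈ P, g = fun x => if x ∈ Y then p x else p x₀})
      (Y ∪ Z) := by
  obtain ⟨hYc, hFfin, hFcm, hFY, hFc⟩ := hYF
  have hx₀ : x₀ ∈ Y := (hYZ.symm.subset (mem_singleton x₀)).1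
  have hZc : IsCompact Z :=
    hPZ ▸ hP.isCompact_biUnion fun p hp => hYc.image_of_continuousOn (hPcont p hp)
  have hPY : ∀ p ∈ P, p '' Y ⊆ Z := fun p hp => hPZ ▸ subset_biUnion_of_mem (u := (· '' Y)) hp
  have hcont : ∀ q ∈ F ∪ P, ContinuousOn q Y := by
    rintro q (hq | hq)
    exacts [(hFcm q hq).1, hPcont q hq]
  have hG : {g | ∃ f ∈ F, g = fun x => if x ∈ Y then f x else f x₀} ∪
      {g | ∃ p ∈ P, g = fun x => if x ∈ Y then p x else p x₀} = extendConst Y x₀ '' (F ∪ P) := by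
    ext g
    simp only [image_union, mem_union, mem_ofPred_eq, mem_image, eq_comm (b := g)]
    rfl
  have hunion : ⋃ g ∈ extendConst Y x₀ '' (F ∪ P), g '' (Y ∪ Z) = Y ∪ Z := by
    simp only [biUnion_image, image_extendConst hx₀ subset_union_left, biUnion_union, hFY, hPZ]
  rw [hG]
  refine ⟨hcomp, (hFfin.union hP).image _, ?_, hunion,
    topContracting_image_extendConst hx₀ hYZ.subset (fun f hf => (hFcm f hf).2) hFc hPY
      (hFfin.union hP) hcont⟩
  rintro _ ⟨q, hq, rfl⟩
  exact ⟨continuousOn_extendConst hYc.isClosed hZc.isClosed hYZ.subset (hcont q hq),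
    (subset_biUnion_of_mem (u := (· '' (Y ∪ Z))) (mem_image_of_mem _ hq)).trans hunion.subset⟩
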